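/- Let H ⊂ ℂ be a lattice and let r = min{|λ| : λ ∈ H∖{0}}. Then for every z ∈ ℂ with 0 < |z| < r one has ζ_H(z) = 1/z − ∑_{n=2}^∞ (∑_{λ ∈ H∖{0}} λ^{−2n}) z^{2n−1}, where the outer series converges absolutely. -/

import Mathlib

/-- A lattice in `ℂ`: the set of `ℤ`-linear combinations of two `ℝ`-linearly independent
complex numbers. -/
def IsLattice (H : Set ℂ) : Prop :=
  ∃ ω₁ ω₂ : ℂ, LinearIndependent ℝ ![ω₁, ω₂] ∧
    H = {z : ℂ | ∃ m n : ℤ, z = m * ω₁ + n * ω₂}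

/-- The Weierstrass zeta function of a lattice `H`. -/
noncomputable def wzeta (H : Set ℂ) (z : ℂ) : ℂ :=
  z⁻¹ + ∑' l : ↥(H \ {0}), ((z - (l : ℂ))⁻¹ + ((l : ℂ))⁻¹ + z / (l : ℂ) ^ 2)

open Complex Function

lemma lattice_neg (H : Set ℂ) (hH : IsLattice H) :
    ∀ x ∈ H \ {(0 : ℂ)}, -x ∈ H \ {(0 : ℂ)} := by
  obtain ⟨ω₁, ω₂, hind, hHeq⟩ := hH
  rintro x ⟨hx, hx0⟩
  have hx0' : x ≠ 0 := by simpa using hx0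
  refine ⟨?_, by simpa [neg_eq_zero] using hx0'⟩
  rw [hHeq] at hx ⊢
  obtain ⟨m, n, rfl⟩ := hx
  exact ⟨-m, -n, by push_cast; ring⟩

lemma lattice_summable (H : Set ℂ) (hH : IsLattice H) :
    Summable fun l : ↥(H \ {0}) => (‖(l : ℂ)‖)⁻¹ ^ 3 := by
  obtain ⟨ω₁, ω₂, hind, hHeq⟩ := hH
  have hkey : ∀ a b : ℝ, a • ω₁ + b • ω₂ = 0 → a = 0 ∧ b = 0 :=
    LinearIndependent.pair_iff.mp hind
  have hω₁ : ω₁ ≠ 0 := by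
    intro h
    have := hkey 1 0 (by simp [h])
    norm_num at this
  have hω₁a : ‖ω₁‖ ≠ 0 := by simpa using hω₁
  set τ : ℂ := ω₂ / ω₁ with hτ
  have hτim : τ.im ≠ 0 := by
    intro h
    have hω₂ : ω₂ = τ * ω₁ := by rw [hτ]; field_simp
    have hre : (τ.re : ℂ) = τ := by
      rw [Complex.ext_iff]
      constructor <;> simp [h]
    have : (τ.re : ℝ) • ω₁ + (-1 : ℝ) • ω₂ = 0 := by
      rw [Complex.real_smul, Complex.real_smul, hre, hω₂]
      push_cast
      ring
    have := (hkey _ _ this).2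
    norm_num at this
  set w : ℂ := if 0 < τ.im then τ else (starRingEnd ℂ) τ with hw
  have him' : 0 < w.im := by
    by_cases hc : 0 < τ.im
    · show 0 < (if 0 < τ.im then τ else (starRingEnd ℂ) τ).im
      rw [if_pos hc]
      exact hc
    · have hlt : τ.im < 0 := lt_of_le_of_ne (not_lt.mp hc) hτim
      show 0 < (if 0 < τ.im then τ else (starRingEnd ℂ) τ).im
      rw [if_neg hc]
      simp only [Complex.conj_im]
      linarith
  set τ' : UpperHalfPlane := ⟨w, him'⟩ with hτ'
  have hτ'coe : (τ' : ℂ) = w := rfl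
  have habs : ∀ m n : ℤ, ‖((m : ℂ) * ω₁ + n * ω₂)‖
      = ‖ω₁‖ * ‖((n : ℂ) * τ' + m)‖ := by
    intro m n
    have h1 : (m : ℂ) * ω₁ + n * ω₂ = ω₁ * ((n : ℂ) * τ + m) := by
      rw [hτ]
      field_simp
      ring
    rw [h1, norm_mul]
    congr 1
    rw [hτ'coe, hw]
    split
    · rfl
    · have : (n : ℂ) * (starRingEnd ℂ) τ + m = (starRingEnd ℂ) ((n : ℂ) * τ + m) := by
        simp [map_add, map_mul]
      rw [this, Complex.norm_conj]
  -- Eisenstein summability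
  have hsum1 : Summable fun x : Fin 2 → ℤ =>
      ‖((x 0 : ℂ) * τ' + x 1)‖ ^ (-(3 : ℝ)) := by
    refine Summable.of_nonneg_of_le (fun x => Real.rpow_nonneg (norm_nonneg _) _)
      (fun x => EisensteinSeries.summand_bound τ' (by norm_num) x)
      (((EisensteinSeries.summable_one_div_norm_rpow (by norm_num)).mul_left _))
  have hrep : ∀ l : ↥(H \ {0}), ∃ m n : ℤ, (l : ℂ) = m * ω₁ + n * ω₂ := by
    intro l
    exact (Set.ext_iff.mp hHeq _).mp l.2.1
  choose mm nn hmn using hrep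
  set i : ↥(H \ {0}) → (Fin 2 → ℤ) := fun l => ![nn l, mm l] with hi
  have hiinj : Injective i := by
    intro l l' h
    have h0 := congrFun h 0
    have h1 := congrFun h 1
    simp only [hi, Matrix.cons_val_zero, Matrix.cons_val_one, Matrix.head_cons] at h0 h1
    apply Subtype.ext
    rw [hmn l, hmn l', h0, h1]
  have hsum2 : Summable fun l : ↥(H \ {0}) =>
      ‖((nn l : ℂ) * τ' + mm l)‖ ^ (-(3 : ℝ)) := by
    refine (hsum1.comp_injective hiinj).congr fun l => ?_
    simp [hi, Function.comp]
  have hlpos : ∀ l : ↥(H \ {0}), 0 < ‖(l : ℂ)‖ := by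
    intro l
    have : (l : ℂ) ≠ 0 := by simpa using l.2.2
    simpa using this
  have habs' : ∀ l : ↥(H \ {0}),
      ‖((nn l : ℂ) * τ' + mm l)‖ = ‖(l : ℂ)‖ / ‖ω₁‖ := by
    intro l
    have := habs (mm l) (nn l)
    rw [← hmn l] at this
    field_simp [this]
    rw [this]; ring
  refine ((hsum2.mul_left ((‖ω₁‖ ^ 3)⁻¹)).congr fun l => ?_)
  rw [habs' l]
  have hl0 : ‖(l : ℂ)‖ ≠ 0 := (hlpos l).ne'
  have hd : ‖(l : ℂ)‖ / ‖ω₁‖ ≠ 0 := div_ne_zero hl0 hω₁a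
  have h3 : (‖(l : ℂ)‖ / ‖ω₁‖) ^ (-(3 : ℝ))
      = ((‖(l : ℂ)‖ / ‖ω₁‖) ^ (3 : ℕ))⁻¹ := by
    rw [← Real.rpow_natCast _ 3, ← Real.rpow_neg (by positivity)]
    norm_num
  rw [h3]
  field_simp

lemma lattice_odd_tsum_zero (H : Set ℂ) (hH : IsLattice H) {k : ℕ} (hk : Odd k) :
    ∑' l : ↥(H \ {0}), (((l : ℂ)) ^ k)⁻¹ = 0 := by
  have hneg := lattice_neg H hH
  let e : ↥(H \ {0}) ≃ ↥(H \ {0}) :=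
    { toFun := fun l => ⟨-l, hneg l l.2⟩
      invFun := fun l => ⟨-l, hneg l l.2⟩
      left_inv := fun l => by simp
      right_inv := fun l => by simp }
  have h := e.tsum_eq (fun l : ↥(H \ {0}) => (((l : ℂ)) ^ k)⁻¹)
  have h2 : ∀ l : ↥(H \ {0}), (((e l : ℂ)) ^ k)⁻¹ = -(((l : ℂ)) ^ k)⁻¹ := by
    intro l
    show (((-l : ℂ)) ^ k)⁻¹ = _
    rw [hk.neg_pow, inv_neg]
  rw [tsum_congr h2, tsum_neg] at h
  linear_combination (-1/2 : ℂ) * h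

/-- Laurent expansion of `ζ_H` near `0`: for `z ≠ 0` closer to `0` than every nonzero
lattice point (i.e. `0 < |z| < r` with `r = min {|λ| : λ ∈ H∖{0}}`),
`ζ_H(z) = 1/z − ∑_{n≥2} (∑_{λ ∈ H∖{0}} λ^{−2n}) z^{2n−1}`, the outer series converging
absolutely.  The index `n ≥ 2` is written as `n + 2` with `n : ℕ`. -/
theorem stmt_5 (H : Set ℂ) (hH : IsLattice H) (z : ℂ) (hz0 : z ≠ 0)
    (hzr : ∀ l ∈ H \ {(0 : ℂ)}, ‖z‖ < ‖l‖) :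
    (Summable fun n : ℕ =>
      ‖((∑' l : ↥(H \ {0}), ((l : ℂ) ^ (2 * (n + 2)))⁻¹) * z ^ (2 * (n + 2) - 1))‖) ∧
    wzeta H z = z⁻¹ -
      ∑' n : ℕ, (∑' l : ↥(H \ {0}), ((l : ℂ) ^ (2 * (n + 2)))⁻¹) * z ^ (2 * (n + 2) - 1) := by
  classical
  have S3 : Summable fun l : ↥(H \ {0}) => (‖(l : ℂ)‖)⁻¹ ^ 3 := lattice_summable H hH
  have hlne : ∀ l : ↥(H \ {0}), (l : ℂ) ≠ 0 := fun l => by simpa using l.2.2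
  have hlpos : ∀ l : ↥(H \ {0}), 0 < ‖(l : ℂ)‖ := fun l => by
    simpa using hlne l
  have hzpos : 0 < ‖z‖ := by simpa using hz0
  have hzl : ∀ l : ↥(H \ {0}), ‖z‖ < ‖(l : ℂ)‖ := fun l => hzr l l.2
  -- a uniform lower bound on |l|
  obtain ⟨r, hzr', hrl⟩ : ∃ r : ℝ, ‖z‖ < r ∧
      ∀ l : ↥(H \ {0}), r ≤ ‖(l : ℂ)‖ := by
    have hfin : {l : ↥(H \ {0}) | ‖(l : ℂ)‖ < 2 * ‖z‖}.Finite := by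
      have hev : ∀ᶠ l : ↥(H \ {0}) in Filter.cofinite,
          (‖(l : ℂ)‖)⁻¹ ^ 3 < ((2 * ‖z‖)⁻¹) ^ 3 :=
        S3.tendsto_cofinite_zero.eventually_lt_const (by positivity)
      refine (Filter.eventually_cofinite.mp hev).subset ?_
      intro l hl
      simp only [Set.mem_setOf_eq, not_lt]
      have h1 : (2 * ‖z‖)⁻¹ ≤ (‖(l : ℂ)‖)⁻¹ :=
        inv_anti₀ (hlpos l) hl.le
      gcongr
    set F : Finset ℝ := insert (2 * ‖z‖)
      (hfin.toFinset.image (fun l : ↥(H \ {0}) => ‖(l : ℂ)‖)) with hF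
    have hFne : F.Nonempty := Finset.insert_nonempty _ _
    refine ⟨F.min' hFne, ?_, ?_⟩
    · rw [Finset.lt_min'_iff]
      intro b hb
      rw [hF, Finset.mem_insert] at hb
      rcases hb with rfl | hb
      · linarith
      · obtain ⟨l, _, rfl⟩ := Finset.mem_image.mp hb
        exact hzl l
    · intro l
      by_cases hl : ‖(l : ℂ)‖ < 2 * ‖z‖
      · refine Finset.min'_le _ _ ?_
        rw [hF]
        exact Finset.mem_insert_of_mem
          (Finset.mem_image_of_mem _ (hfin.mem_toFinset.mpr hl))
      · refine le_trans (Finset.min'_le _ _ ?_) (not_lt.mp hl)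
        rw [hF]
        exact Finset.mem_insert_self _ _
  have hr0 : 0 < r := lt_trans hzpos hzr'
  set t : ℝ := ‖z‖ / r with ht
  have ht0 : 0 ≤ t := by positivity
  have ht1 : t < 1 := (div_lt_one hr0).mpr hzr'
  -- the double-indexed family
  set G : ↥(H \ {0}) × ℕ → ℂ :=
    fun p => -(z ^ (p.2 + 2) * (((p.1 : ℂ)) ^ (p.2 + 3))⁻¹) with hGdef
  have hGabs : ∀ p : ↥(H \ {0}) × ℕ, ‖(G p)‖ =
      (‖z‖ ^ 2 * (‖((p.1 : ℂ))‖)⁻¹ ^ 3) *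
        (‖z‖ / ‖((p.1 : ℂ))‖) ^ p.2 := by
    rintro ⟨l, j⟩
    have hl0 : ‖(l : ℂ)‖ ≠ 0 := (hlpos l).ne'
    simp only [hGdef, norm_neg, norm_mul, norm_pow, norm_inv]
    rw [div_pow, pow_add, pow_add (‖(l : ℂ)‖), mul_inv, inv_pow]
    field_simp
  have hGb : ∀ p : ↥(H \ {0}) × ℕ, ‖(G p)‖ ≤
      (‖z‖ ^ 2 * (‖((p.1 : ℂ))‖)⁻¹ ^ 3) * t ^ p.2 := by
    rintro ⟨l, j⟩
    rw [hGabs ⟨l, j⟩]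
    have hxt : ‖z‖ / ‖((l : ℂ))‖ ≤ t := by
      rw [ht]
      gcongr
      exact hrl l
    exact mul_le_mul_of_nonneg_left
      (pow_le_pow_left₀ (div_nonneg hzpos.le (hlpos l).le) hxt j) (by positivity)
  have hGsumabs : Summable fun p : ↥(H \ {0}) × ℕ => ‖(G p)‖ := by
    refine Summable.of_nonneg_of_le (fun p => norm_nonneg _) hGb ?_
    exact (S3.mul_left (‖z‖ ^ 2)).mul_of_nonneg
      (summable_geometric_of_lt_one ht0 ht1)
      (fun l => by positivity) (fun j => by positivity)
  have hGsum : Summable G := Summable.of_norm (by simpa using hGsumabs)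
  -- pointwise expansion
  have hexp : ∀ l : ↥(H \ {0}),
      HasSum (fun j : ℕ => G (l, j)) ((z - (l : ℂ))⁻¹ + ((l : ℂ))⁻¹ + z / (l : ℂ) ^ 2) := by
    intro l
    have hl0 : (l : ℂ) ≠ 0 := hlne l
    have hzl' : z ≠ (l : ℂ) := fun h => absurd (h ▸ hzl l) (lt_irrefl _)
    have hw : ‖z / (l : ℂ)‖ < 1 := by
      rw [norm_div]
      exact (div_lt_one (hlpos l)).mpr (hzl l)
    have h1 : HasSum (fun j : ℕ => (z / (l : ℂ)) ^ j) ((1 - z / (l : ℂ))⁻¹) :=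
      hasSum_geometric_of_norm_lt_one hw
    have h2 := (hasSum_nat_add_iff' 2).mpr h1
    have h3 := h2.mul_left (-((l : ℂ))⁻¹)
    have hne : (1 : ℂ) - z / (l : ℂ) ≠ 0 := by
      intro h
      apply hzl'
      field_simp at h
      linear_combination -h
    have hfun : ∀ j : ℕ, -((l : ℂ))⁻¹ * (z / (l : ℂ)) ^ (j + 2) = G (l, j) := by
      intro j
      simp only [hGdef]
      rw [div_pow]
      field_simp
      ring
    have hval : -((l : ℂ))⁻¹ * ((1 - z / (l : ℂ))⁻¹ - ∑ i ∈ Finset.range 2, (z / (l : ℂ)) ^ i)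
        = (z - (l : ℂ))⁻¹ + ((l : ℂ))⁻¹ + z / (l : ℂ) ^ 2 := by
      rw [Finset.sum_range_succ, Finset.sum_range_one]
      have hsub : z - (l : ℂ) ≠ 0 := sub_ne_zero.mpr hzl'
      have hsub' : (l : ℂ) - z ≠ 0 := sub_ne_zero.mpr (Ne.symm hzl')
      field_simp
      ring
    rw [← hval]
    exact h3.congr_fun fun j => (hfun j).symm
  set Gk : ℕ → ℂ := fun k => ∑' l : ↥(H \ {0}), (((l : ℂ)) ^ k)⁻¹ with hGk
  have hGkodd : ∀ k : ℕ, Odd k → Gk k = 0 := fun k hk => lattice_odd_tsum_zero H hH hk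
  have hinnerl : ∀ j : ℕ, ∑' l : ↥(H \ {0}), G (l, j) = -(z ^ (j + 2)) * Gk (j + 3) := by
    intro j
    rw [hGk, ← tsum_mul_left]
    apply tsum_congr
    intro l
    simp only [hGdef]
    ring
  have hsummable_l : ∀ l : ↥(H \ {0}), Summable fun j : ℕ => G (l, j) :=
    fun l => (hexp l).summable
  have hsummable_j : ∀ j : ℕ, Summable fun l : ↥(H \ {0}) => G (l, j) := by
    intro j
    apply hGsum.comp_injective (i := fun l => (l, j))
    intro a b h
    simpa using congrArg Prod.fst h
  have hw1 : ∑' l : ↥(H \ {0}), ((z - (l : ℂ))⁻¹ + ((l : ℂ))⁻¹ + z / (l : ℂ) ^ 2)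
      = ∑' j : ℕ, ∑' l : ↥(H \ {0}), G (l, j) := by
    calc ∑' l : ↥(H \ {0}), ((z - (l : ℂ))⁻¹ + ((l : ℂ))⁻¹ + z / (l : ℂ) ^ 2)
        = ∑' l : ↥(H \ {0}), ∑' j : ℕ, G (l, j) :=
          tsum_congr fun l => ((hexp l).tsum_eq).symm
      _ = ∑' j : ℕ, ∑' l : ↥(H \ {0}), G (l, j) :=
          (Summable.tsum_comm' (f := fun (l : ↥(H \ {0})) (j : ℕ) => G (l, j))
            (hGsum.congr fun p => rfl) hsummable_l hsummable_j).symm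
  have hw2 : ∑' j : ℕ, ∑' l : ↥(H \ {0}), G (l, j)
      = ∑' n : ℕ, (-(Gk (2 * (n + 2)) * z ^ (2 * (n + 2) - 1))) := by
    rw [tsum_congr hinnerl]
    have hinj : Injective (fun n : ℕ => 2 * n + 1) := fun a b h => by dsimp at h; omega
    have hsupp : support (fun j : ℕ => -(z ^ (j + 2)) * Gk (j + 3)) ⊆
        Set.range (fun n : ℕ => 2 * n + 1) := by
      intro j hj
      rcases Nat.even_or_odd j with he | ho
      · exfalso
        apply hj
        have hodd : Odd (j + 3) := he.add_odd ⟨1, by norm_num⟩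
        show -(z ^ (j + 2)) * Gk (j + 3) = 0
        rw [hGkodd _ hodd, mul_zero]
      · obtain ⟨m, hm⟩ := ho
        exact ⟨m, by dsimp; omega⟩
    rw [← hinj.tsum_eq hsupp]
    apply tsum_congr
    intro n
    have e1 : 2 * n + 1 + 2 = 2 * (n + 2) - 1 := by omega
    have e2 : 2 * n + 1 + 3 = 2 * (n + 2) := by omega
    rw [e1, e2]
    ring
  have hmain : wzeta H z = z⁻¹ -
      ∑' n : ℕ, Gk (2 * (n + 2)) * z ^ (2 * (n + 2) - 1) := by
    rw [wzeta, hw1, hw2, tsum_neg]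
    ring
  -- part 1 : absolute convergence
  set S : ℝ := ∑' l : ↥(H \ {0}), (‖(l : ℂ)‖)⁻¹ ^ 3 with hS
  have hbound : ∀ n : ℕ, ‖(Gk (2 * (n + 2)) * z ^ (2 * (n + 2) - 1))‖ ≤
      (S * ‖z‖ ^ 2 * t) * (t ^ 2) ^ n := by
    intro n
    have hidx : 2 * (n + 2) = 2 * n + 4 := by omega
    have hidx2 : 2 * (n + 2) - 1 = 2 * n + 3 := by omega
    rw [hidx2, hidx]
    have h1 : ∀ l : ↥(H \ {0}), (‖(l : ℂ)‖)⁻¹ ^ (2 * n + 4) ≤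
        (‖(l : ℂ)‖)⁻¹ ^ 3 * (r⁻¹) ^ (2 * n + 1) := by
      intro l
      have hsplit : (‖(l : ℂ)‖)⁻¹ ^ (2 * n + 4) =
          (‖(l : ℂ)‖)⁻¹ ^ 3 * ((‖(l : ℂ)‖)⁻¹) ^ (2 * n + 1) := by
        rw [← pow_add]
        congr 1
        omega
      rw [hsplit]
      exact mul_le_mul_of_nonneg_left
        (pow_le_pow_left₀ (by positivity) (inv_anti₀ hr0 (hrl l)) _) (by positivity)
    have hsk : Summable fun l : ↥(H \ {0}) => (‖(l : ℂ)‖)⁻¹ ^ (2 * n + 4) :=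
      Summable.of_nonneg_of_le (fun l => by positivity) h1 (S3.mul_right _)
    have hsum' : Summable fun l : ↥(H \ {0}) => ‖(((l : ℂ)) ^ (2 * n + 4))⁻¹‖ := by
      refine hsk.congr fun l => ?_
      rw [norm_inv, norm_pow, inv_pow]
    have h2 : ‖(Gk (2 * n + 4))‖ ≤
        ∑' l : ↥(H \ {0}), (‖(l : ℂ)‖)⁻¹ ^ (2 * n + 4) := by
      calc ‖(Gk (2 * n + 4))‖
          = ‖∑' l : ↥(H \ {0}), (((l : ℂ)) ^ (2 * n + 4))⁻¹‖ := by
            rw [hGk]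
        _ ≤ ∑' l : ↥(H \ {0}), ‖(((l : ℂ)) ^ (2 * n + 4))⁻¹‖ := norm_tsum_le_tsum_norm hsum'
        _ = ∑' l : ↥(H \ {0}), (‖(l : ℂ)‖)⁻¹ ^ (2 * n + 4) :=
            tsum_congr fun l => by rw [norm_inv, norm_pow, inv_pow]
    have h3 : ∑' l : ↥(H \ {0}), (‖(l : ℂ)‖)⁻¹ ^ (2 * n + 4) ≤
        S * r⁻¹ ^ (2 * n + 1) := by
      calc ∑' l : ↥(H \ {0}), (‖(l : ℂ)‖)⁻¹ ^ (2 * n + 4)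
          ≤ ∑' l : ↥(H \ {0}), (‖(l : ℂ)‖)⁻¹ ^ 3 * r⁻¹ ^ (2 * n + 1) :=
            Summable.tsum_le_tsum h1 hsk (S3.mul_right _)
        _ = S * r⁻¹ ^ (2 * n + 1) := by rw [tsum_mul_right]
    have e3 : (t ^ 2) ^ n * t = t ^ (2 * n + 1) := by rw [← pow_mul, ← pow_succ]
    have e4 : t ^ (2 * n + 1) = ‖z‖ ^ (2 * n + 1) * (r⁻¹) ^ (2 * n + 1) := by
      rw [ht, div_eq_mul_inv, mul_pow]
    have e5 : ‖z‖ ^ (2 * n + 3) = ‖z‖ ^ 2 * ‖z‖ ^ (2 * n + 1) := by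
      rw [← pow_add]
      congr 1
      omega
    calc ‖(Gk (2 * n + 4) * z ^ (2 * n + 3))‖
        = ‖(Gk (2 * n + 4))‖ * ‖z‖ ^ (2 * n + 3) := by
          rw [norm_mul, norm_pow]
      _ ≤ (S * r⁻¹ ^ (2 * n + 1)) * ‖z‖ ^ (2 * n + 3) :=
          mul_le_mul_of_nonneg_right (le_trans h2 h3) (by positivity)
      _ = (S * ‖z‖ ^ 2 * t) * (t ^ 2) ^ n := by
          rw [e5, show (S * ‖z‖ ^ 2 * t) * (t ^ 2) ^ n
            = S * ‖z‖ ^ 2 * ((t ^ 2) ^ n * t) by ring, e3, e4]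
          ring
  have ht2 : t ^ 2 < 1 := pow_lt_one₀ ht0 ht1 two_ne_zero
  have hpart1 : Summable fun n : ℕ =>
      ‖(Gk (2 * (n + 2)) * z ^ (2 * (n + 2) - 1))‖ :=
    Summable.of_nonneg_of_le (fun n => norm_nonneg _) hbound
      ((summable_geometric_of_lt_one (by positivity) ht2).mul_left _)
  simp only [hGk] at hpart1 hmain
  exact ⟨hpart1, hmain⟩
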